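/- arXiv:cs/0302027 — 2 statements merged into one kernel-verified Lean document; each statement's English description precedes it below -/
import Mathlib

section
/- The three tetrahedra abce, acde, abde, where a = (0,0,0), b = (1,0,0), c = (0,1,0), d = (0,0,1), e = (2/3,2/3,2/3), each have a dihedral angle of exactly 2π/3 along the common edge ae; in particular each is obtuse. -/
open Real EuclideanGeometry

/-- The dihedral angle of the tetrahedron `abcd` along the edge `ab`:
the angle between the components of `c - a` and `d - a` orthogonal to `b - a`. -/
noncomputable def dihedralAngle (a b c d : EuclideanSpace ℝ (Fin 3)) : ℝ :=
  InnerProductGeometry.angle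
    ((c - a) - ((inner ℝ (c - a) (b - a) : ℝ) / (inner ℝ (b - a) (b - a) : ℝ)) • (b - a))
    ((d - a) - ((inner ℝ (d - a) (b - a) : ℝ) / (inner ℝ (b - a) (b - a) : ℝ)) • (b - a))

/-- A point of `ℝ³` given by its three coordinates. -/
noncomputable def pt (x y z : ℝ) : EuclideanSpace ℝ (Fin 3) :=
  (WithLp.equiv 2 (Fin 3 → ℝ)).symm ![x, y, z]

/-! With `a` at the origin and `e` on the diagonal, the components of `b`, `c`, `d` orthogonal to
`ae` are `b - g`, `c - g`, `d - g`, where `g = (1/3, 1/3, 1/3)` is the centroid of `bcd`. These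
three vectors have equal length and sum to zero, so any two of them make the angle `2π/3`. -/

open scoped RealInnerProductSpace

namespace InnerProductGeometry

variable {V : Type*} [NormedAddCommGroup V] [InnerProductSpace ℝ V]

theorem angle_eq_two_pi_div_three_of_add_add_eq_zero {u v w : V} (hsum : u + v + w = 0)
    (huw : ‖u‖ = ‖w‖) (hvw : ‖v‖ = ‖w‖) (hu : u ≠ 0) : angle u v = 2 * π / 3 := by
  have huv : ‖u‖ = ‖v‖ := huw.trans hvw.symm
  have hw : w = -(u + v) := eq_neg_of_add_eq_zero_right hsum
  have hinner : ⟪u, v⟫ = -(‖u‖ ^ 2 / 2) := by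
    have := norm_add_sq_real u v
    rw [← norm_neg (u + v), ← hw, ← huw, ← huv] at this
    linarith
  have hu' : ‖u‖ ≠ 0 := norm_ne_zero_iff.mpr hu
  have hcos : ⟪u, v⟫ / (‖u‖ * ‖v‖) = -cos (π / 3) := by
    rw [hinner, ← huv, cos_pi_div_three]
    field_simp
  rw [angle, hcos, arccos_neg, arccos_cos (by positivity) (by linarith [pi_pos])]
  ring

end InnerProductGeometry

open InnerProductGeometry

lemma inner_pt (x y z x' y' z' : ℝ) :
    ⟪pt x y z, pt x' y' z'⟫ = x * x' + y * y' + z * z' := by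
  simp [pt, PiLp.inner_apply, Fin.sum_univ_three, mul_comm]

lemma norm_pt (x y z : ℝ) : ‖pt x y z‖ = √(x ^ 2 + y ^ 2 + z ^ 2) := by
  simp [pt, EuclideanSpace.norm_eq, Fin.sum_univ_three]

lemma pt_add (x y z x' y' z' : ℝ) : pt x y z + pt x' y' z' = pt (x + x') (y + y') (z + z') := by
  ext i
  fin_cases i <;> simp [pt]

lemma pt_sub (x y z x' y' z' : ℝ) : pt x y z - pt x' y' z' = pt (x - x') (y - y') (z - z') := by
  ext i
  fin_cases i <;> simp [pt]

lemma pt_smul (r x y z : ℝ) : r • pt x y z = pt (r * x) (r * y) (r * z) := by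
  ext i
  fin_cases i <;> simp [pt]

lemma pt_zero : pt 0 0 0 = 0 := by
  ext i
  fin_cases i <;> simp [pt]

lemma dihedralAngle_origin_diagonal (t : ℝ) (ht : t ≠ 0) (x y z x' y' z' : ℝ) :
    dihedralAngle (pt 0 0 0) (pt t t t) (pt x y z) (pt x' y' z') =
      InnerProductGeometry.angle
        (pt x y z - pt ((x + y + z) / 3) ((x + y + z) / 3) ((x + y + z) / 3))
        (pt x' y' z' - pt ((x' + y' + z') / 3) ((x' + y' + z') / 3) ((x' + y' + z') / 3)) := by
  simp only [dihedralAngle, pt_sub, inner_pt, pt_smul, sub_zero]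
  congr 2 <;> field_simp <;> ring

/-- With `a = (0,0,0)`, `b = (1,0,0)`, `c = (0,1,0)`, `d = (0,0,1)`, `e = (2/3,2/3,2/3)`,
each of the three tetrahedra `abce`, `acde`, `abde` has dihedral angle exactly `2π/3`
along the common edge `ae`; in particular each is obtuse, since `2π/3 > π/2`. -/
theorem delaunay_tetrahedra_obtuse_along_ae :
    dihedralAngle (pt 0 0 0) (pt (2/3) (2/3) (2/3)) (pt 1 0 0) (pt 0 1 0) = 2 * π / 3 ∧
    dihedralAngle (pt 0 0 0) (pt (2/3) (2/3) (2/3)) (pt 0 1 0) (pt 0 0 1) = 2 * π / 3 ∧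
    dihedralAngle (pt 0 0 0) (pt (2/3) (2/3) (2/3)) (pt 1 0 0) (pt 0 0 1) = 2 * π / 3 ∧
    π / 2 < 2 * π / 3 := by
  set g := pt (1/3) (1/3) (1/3)
  have hsum : (pt 1 0 0 - g) + (pt 0 1 0 - g) + (pt 0 0 1 - g) = 0 := by
    rw [pt_sub, pt_sub, pt_sub, pt_add, pt_add, ← pt_zero]
    norm_num
  have hb : ‖pt 1 0 0 - g‖ = √(2/3) := by rw [pt_sub, norm_pt]; norm_num
  have hc : ‖pt 0 1 0 - g‖ = √(2/3) := by rw [pt_sub, norm_pt]; norm_num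
  have hd : ‖pt 0 0 1 - g‖ = √(2/3) := by rw [pt_sub, norm_pt]; norm_num
  have ne_zero_of_norm (p : EuclideanSpace ℝ (Fin 3)) (hp : ‖p‖ = √(2/3)) : p ≠ 0 := by
    rw [← norm_ne_zero_iff, hp]
    positivity
  simp only [dihedralAngle_origin_diagonal (2/3) (by norm_num)]
  norm_num
  refine ⟨?_, ?_, ?_, by linarith [pi_pos]⟩
  · exact angle_eq_two_pi_div_three_of_add_add_eq_zero hsum
      (hb.trans hd.symm) (hc.trans hd.symm) (ne_zero_of_norm _ hb)
  · exact angle_eq_two_pi_div_three_of_add_add_eq_zero (by rw [← hsum]; abel)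
      (hc.trans hb.symm) (hd.trans hb.symm) (ne_zero_of_norm _ hc)
  · exact angle_eq_two_pi_div_three_of_add_add_eq_zero (by rw [← hsum]; abel)
      (hb.trans hc.symm) (hd.trans hc.symm) (ne_zero_of_norm _ hb)
end

section
/- The twenty tetrahedra formed by coning each face of a regular icosahedron to its center are acute: each such tetrahedron, with base an equilateral triangle face of the icosahedron and apex the icosahedron's center, has all six dihedral angles strictly less than π/2. -/
/-!
The dihedral angle of `pqxy` along `pq` is acute iff the components of `x - p` and `y - p`
orthogonal to `q - p` have positive inner product, i.e.
`⟪x - p, q - p⟫ ⟪y - p, q - p⟫ < ⟪x - p, y - p⟫ ‖q - p‖²`, and the law of cosines turns this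
into a polynomial inequality in the edge lengths. For a cone with lateral edges `R` over an
equilateral triangle of side `s` this reads `s⁴ < 2 s⁴` along base edges and `s⁴ < 2 R² s²`,
i.e. `s² < 2 R²`, along lateral edges. For `R = s sin(2π/5)` the latter says
`2 sin²(2π/5) = 1 - cos(4π/5) > 1`.
-/

open Real EuclideanGeometry

/-- A tetrahedron is acute if all six of its dihedral angles are strictly less than `π/2`. -/
def IsAcuteTetra (a b c d : EuclideanSpace ℝ (Fin 3)) : Prop :=
  dihedralAngle a b c d < π / 2 ∧ dihedralAngle a c b d < π / 2 ∧
  dihedralAngle a d b c < π / 2 ∧ dihedralAngle b c a d < π / 2 ∧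
  dihedralAngle b d a c < π / 2 ∧ dihedralAngle c d a b < π / 2

section InnerProductSpace

variable {V : Type*} [NormedAddCommGroup V] [InnerProductSpace ℝ V]

theorem InnerProductGeometry.angle_lt_pi_div_two_iff_inner_pos (x y : V) :
    InnerProductGeometry.angle x y < π / 2 ↔ 0 < (inner ℝ x y : ℝ) := by
  rw [InnerProductGeometry.angle, arccos_lt_pi_div_two]
  rcases eq_or_ne x 0 with rfl | hx
  · simp
  rcases eq_or_ne y 0 with rfl | hy
  · simp
  exact div_pos_iff_of_pos_right (by positivity)

theorem real_inner_sub_proj_sub_proj (x y u : V) :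
    (inner ℝ (x - ((inner ℝ x u : ℝ) / (inner ℝ u u : ℝ)) • u)
      (y - ((inner ℝ y u : ℝ) / (inner ℝ u u : ℝ)) • u) : ℝ) =
      inner ℝ x y - inner ℝ x u * inner ℝ y u / inner ℝ u u := by
  rcases eq_or_ne u 0 with rfl | hu
  · simp
  have huu : (inner ℝ u u : ℝ) ≠ 0 := inner_self_ne_zero.mpr hu
  simp only [inner_sub_left, inner_sub_right, real_inner_smul_left, real_inner_smul_right,
    real_inner_comm u x, real_inner_comm u y]
  field_simp
  ring

theorem real_inner_sub_sub_eq_dist_sq (p x y : V) :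
    (inner ℝ (x - p) (y - p) : ℝ) = (dist p x ^ 2 + dist p y ^ 2 - dist x y ^ 2) / 2 := by
  rw [real_inner_eq_norm_mul_self_add_norm_mul_self_sub_norm_sub_mul_self_div_two,
    sub_sub_sub_cancel_right, dist_comm p x, dist_comm p y, dist_eq_norm, dist_eq_norm,
    dist_eq_norm]
  ring

end InnerProductSpace

theorem dihedralAngle_lt_pi_div_two_iff_dist {p q x y : EuclideanSpace ℝ (Fin 3)} (hpq : p ≠ q) :
    dihedralAngle p q x y < π / 2 ↔
      (dist p x ^ 2 + dist p q ^ 2 - dist x q ^ 2) * (dist p y ^ 2 + dist p q ^ 2 - dist y q ^ 2) <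
        2 * dist p q ^ 2 * (dist p x ^ 2 + dist p y ^ 2 - dist x y ^ 2) := by
  have hd : 0 < dist p q ^ 2 := pow_pos (dist_pos.mpr hpq) 2
  rw [dihedralAngle, InnerProductGeometry.angle_lt_pi_div_two_iff_inner_pos,
    real_inner_sub_proj_sub_proj, real_inner_sub_sub_eq_dist_sq, real_inner_sub_sub_eq_dist_sq,
    real_inner_sub_sub_eq_dist_sq, real_inner_sub_sub_eq_dist_sq, dist_self, sub_pos]
  rw [show (dist p q ^ 2 + dist p q ^ 2 - 0 ^ 2) / 2 = dist p q ^ 2 by ring, div_lt_iff₀ hd]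
  constructor <;> intro h <;> linarith

theorem isAcuteTetra_of_equilateral_of_dist_apex_eq {a b c o : EuclideanSpace ℝ (Fin 3)}
    {s R : ℝ} (hs : 0 < s) (hab : dist a b = s) (hbc : dist b c = s) (hac : dist a c = s)
    (hoa : dist o a = R) (hob : dist o b = R) (hoc : dist o c = R) (hsR : s ^ 2 < 2 * R ^ 2) :
    IsAcuteTetra a b c o := by
  have hR : R ≠ 0 := by rintro rfl; linarith [pow_pos hs 2]
  have hab' : a ≠ b := dist_pos.mp (hab ▸ hs)
  have hac' : a ≠ c := dist_pos.mp (hac ▸ hs)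
  have hbc' : b ≠ c := dist_pos.mp (hbc ▸ hs)
  have hao : a ≠ o := fun h => hR (by rw [← hoa, h, dist_self])
  have hbo : b ≠ o := fun h => hR (by rw [← hob, h, dist_self])
  have hco : c ≠ o := fun h => hR (by rw [← hoc, h, dist_self])
  rw [IsAcuteTetra, dihedralAngle_lt_pi_div_two_iff_dist hab',
    dihedralAngle_lt_pi_div_two_iff_dist hac', dihedralAngle_lt_pi_div_two_iff_dist hao,
    dihedralAngle_lt_pi_div_two_iff_dist hbc', dihedralAngle_lt_pi_div_two_iff_dist hbo,
    dihedralAngle_lt_pi_div_two_iff_dist hco]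
  simp only [dist_comm b a, dist_comm c a, dist_comm c b, dist_comm a o, dist_comm b o,
    dist_comm c o, hab, hbc, hac, hoa, hob, hoc, add_sub_cancel_left, add_sub_cancel_right]
  have hbase : s ^ 2 * s ^ 2 < 2 * s ^ 2 * s ^ 2 := by nlinarith [pow_pos hs 4]
  have hlateral : s ^ 2 * s ^ 2 < 2 * R ^ 2 * s ^ 2 := by nlinarith [pow_pos hs 2]
  exact ⟨hbase, hbase, hlateral, hbase, hlateral, hlateral⟩

theorem one_lt_two_mul_sin_two_pi_div_five_sq : 1 < 2 * sin (2 * π / 5) ^ 2 := by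
  have hcos : cos (2 * (2 * π / 5)) < 0 :=
    cos_neg_of_pi_div_two_lt_of_lt (by linarith [pi_pos]) (by linarith [pi_pos])
  rw [cos_two_mul, cos_sq'] at hcos
  linarith

/-- The tetrahedra obtained by coning a face of a regular icosahedron to its center are
acute: any tetrahedron with equilateral base of side `s` and apex at distance
`R = s·sin(2π/5)` (the circumradius of the icosahedron) from each base vertex has all
six dihedral angles strictly less than `π/2`. -/
theorem icosahedron_cone_tetrahedra_acute
    (a b c o : EuclideanSpace ℝ (Fin 3)) (s : ℝ) (hs : 0 < s)
    (hab : dist a b = s) (hbc : dist b c = s) (hac : dist a c = s)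
    (hoa : dist o a = s * Real.sin (2 * π / 5))
    (hob : dist o b = s * Real.sin (2 * π / 5))
    (hoc : dist o c = s * Real.sin (2 * π / 5)) :
    IsAcuteTetra a b c o := by
  refine isAcuteTetra_of_equilateral_of_dist_apex_eq hs hab hbc hac hoa hob hoc ?_
  rw [mul_pow]
  nlinarith [one_lt_two_mul_sin_two_pi_div_five_sq, pow_pos hs 2]
end
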